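/- arXiv:2111.01442 — 3 statements merged into one kernel-verified Lean document; each statement's English description precedes it below -/
import Mathlib

section
/- Let n ≥ 1 be an integer, 0 < s < n, and f ∈ L^1(ℝ^n). Then ‖M_s f‖_{L^{n/(n−s),∞}(ℝ^n)} ≥ ‖f‖_{L^1(ℝ^n)}. -/
/-!
A Vitali covering argument with the superadditivity of `a ↦ a ^ (n / (n - s))` gives the weak-type
bound `|{M_s f > t}| ≤ 4ⁿ (‖f‖₁ / t) ^ (n / (n - s))`. It makes the supremum defining the weak
quasinorm finite, and it shows that the set where the ball averages are unbounded (where the `sSup`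
defining `fracMaximal` takes the junk value `0`) is null.

For the lower bound let `A` be the mass of `|f|` in `B(0, R)` and `ρ > R`. Every `x ∈ B(0, ρ - R)`
has `B(0, R) ⊆ B(x, ‖x‖ + R)` with `‖x‖ + R < ρ`, so `M_s f(x) > t := |B(0, ρ)| ^ (-(n - s) / n) A`.
Hence `t |{M_s f > t}| ^ ((n - s) / n) ≥ A ((ρ - R) / ρ) ^ (n - s)`; let `ρ → ∞`, then `R → ∞`.
-/

open MeasureTheory Real Set
open scoped ENNReal

noncomputable section

abbrev Rn (n : ℕ) := EuclideanSpace ℝ (Fin n)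

/-- The constant `γ_s = 2^{-s} π^{-n/2} Γ((n-s)/2) / Γ(s/2)`. -/
def rieszGamma (n : ℕ) (s : ℝ) : ℝ :=
  (2 : ℝ) ^ (-s) * Real.pi ^ (-(n : ℝ) / 2) * Real.Gamma (((n : ℝ) - s) / 2) / Real.Gamma (s / 2)

/-- The Riesz potential `I_s f (x) = γ_s ∫ f(x-y) |y|^{s-n} dy`. -/
def rieszPotential (n : ℕ) (s : ℝ) (f : Rn n → ℝ) (x : Rn n) : ℝ :=
  rieszGamma n s * ∫ y : Rn n, f (x - y) * ‖y‖ ^ (s - (n : ℝ))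

/-- `v_n`, the Lebesgue measure of the unit ball of `ℝ^n`. -/
def unitBallVol (n : ℕ) : ℝ := (volume (Metric.ball (0 : Rn n) 1)).toReal

/-- The weak `L^{n/(n-s)}` quasinorm `sup_{λ>0} λ |{|g|>λ}|^{(n-s)/n}`. -/
def weakNorm (n : ℕ) (s : ℝ) (g : Rn n → ℝ) : ℝ :=
  sSup {c : ℝ | ∃ lam : ℝ, 0 < lam ∧
    c = lam * (volume {x : Rn n | lam < |g x|}).toReal ^ (((n : ℝ) - s) / (n : ℝ))}

/-- The norm `⦀g⦀_r = sup_{0<|E|<∞} |E|^{-1/r+(n-s)/n} (∫_E |g|^r)^{1/r}`. -/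
def tripleNorm (n : ℕ) (s r : ℝ) (g : Rn n → ℝ) : ℝ :=
  sSup {c : ℝ | ∃ E : Set (Rn n), MeasurableSet E ∧ 0 < volume E ∧ volume E < ⊤ ∧
    c = (volume E).toReal ^ (-1 / r + ((n : ℝ) - s) / (n : ℝ)) *
      (∫ x in E, |g x| ^ r) ^ (1 / r)}

/-- The centered fractional maximal function
`M_s f (x) = sup_{r>0} |B(x,r)|^{-(1-s/n)} ∫_{B(x,r)} |f|`. -/
def fracMaximal (n : ℕ) (s : ℝ) (f : Rn n → ℝ) (x : Rn n) : ℝ :=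
  sSup {c : ℝ | ∃ rad : ℝ, 0 < rad ∧
    c = (volume (Metric.ball x rad)).toReal ^ (-(1 - s / (n : ℝ))) *
      ∫ y in Metric.ball x rad, |f y|}


open Metric Filter Topology Module Function

theorem ENNReal.tsum_rpow_le_rpow_tsum {ι : Type*} (g : ι → ℝ≥0∞) {p : ℝ} (hp : 1 ≤ p) :
    ∑' i, g i ^ p ≤ (∑' i, g i) ^ p := by
  have hsplit (a : ℝ≥0∞) : a ^ p = a ^ (p - 1) * a := by
    conv_lhs => rw [← sub_add_cancel p 1]
    rw [ENNReal.rpow_add_of_nonneg _ _ (sub_nonneg.2 hp) zero_le_one, ENNReal.rpow_one]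
  calc ∑' i, g i ^ p = ∑' i, g i ^ (p - 1) * g i := by simp_rw [← hsplit]
    _ ≤ ∑' i, (∑' j, g j) ^ (p - 1) * g i := by
      gcongr with i
      exact ENNReal.le_tsum i
    _ = (∑' i, g i) ^ p := by rw [ENNReal.tsum_mul_left, ← hsplit]

theorem tsum_ofReal_setIntegral_le_integral {α ι : Type*} [MeasurableSpace α] [Countable ι]
    {μ : Measure α} {f : α → ℝ} (hf : Integrable f μ) (hf0 : 0 ≤ f) {s : ι → Set α}
    (hs : ∀ i, MeasurableSet (s i)) (hd : Pairwise (Disjoint on s)) :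
    ∑' i, ENNReal.ofReal (∫ x in s i, f x ∂μ) ≤ ENNReal.ofReal (∫ x, f x ∂μ) := by
  have hf0' : 0 ≤ᵐ[μ] f := .of_forall hf0
  simp_rw [ofReal_integral_eq_lintegral_ofReal hf.integrableOn (ae_restrict_of_ae hf0'),
    ofReal_integral_eq_lintegral_ofReal hf hf0', ← lintegral_iUnion hs hd]
  exact setLIntegral_le_lintegral _ _

theorem tendsto_setIntegral_ball_nat {X : Type*} [PseudoMetricSpace X] [MeasurableSpace X]
    [OpensMeasurableSpace X] {μ : Measure X} {g : X → ℝ} (hg : Integrable g μ) (x : X) :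
    Tendsto (fun k : ℕ => ∫ y in ball x k, g y ∂μ) atTop (𝓝 (∫ y, g y ∂μ)) := by
  have h := tendsto_setIntegral_of_monotone (μ := μ) (f := g) (s := fun k : ℕ => ball x k)
    (fun k => measurableSet_ball)
    (fun i j hij => ball_subset_ball (by exact_mod_cast hij))
    (by rw [iUnion_ball_nat]; exact hg.integrableOn)
  rwa [iUnion_ball_nat, setIntegral_univ] at h

theorem measureReal_ball_pos {X : Type*} [PseudoMetricSpace X] [ProperSpace X] [MeasurableSpace X]
    (μ : Measure X) [μ.IsOpenPosMeasure] [IsFiniteMeasureOnCompacts μ] (x : X) {r : ℝ}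
    (hr : 0 < r) : 0 < μ.real (ball x r) :=
  ENNReal.toReal_pos (measure_ball_pos μ x hr).ne' measure_ball_lt_top.ne

theorem lt_div_rpow_inv_of_lt_rpow_neg_mul {w a t q : ℝ} (hw : 0 ≤ w) (ht : 0 < t) (hq : 0 < q)
    (h : t < w ^ (-q) * a) : w < (a / t) ^ q⁻¹ := by
  rcases hw.eq_or_lt with rfl | hw
  · rw [Real.zero_rpow (neg_ne_zero.2 hq.ne'), zero_mul] at h
    exact absurd h ht.not_gt
  have hwq : w ^ q < a / t := by
    rw [Real.rpow_neg hw.le, ← div_eq_inv_mul, lt_div_iff₀ (by positivity)] at h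
    rwa [lt_div_iff₀ ht, mul_comm]
  calc w = (w ^ q) ^ q⁻¹ := by rw [← Real.rpow_mul hw.le, mul_inv_cancel₀ hq.ne', Real.rpow_one]
    _ < (a / t) ^ q⁻¹ := by gcongr

section FracBallAverage

variable {X : Type*} [PseudoMetricSpace X] [MeasurableSpace X]

def fracBallAverage (μ : Measure X) (q : ℝ) (f : X → ℝ) (x : X) (r : ℝ) : ℝ :=
  μ.real (ball x r) ^ (-q) * ∫ y in ball x r, |f y| ∂μ

def fracBallAverages (μ : Measure X) (q : ℝ) (f : X → ℝ) (x : X) : Set ℝ :=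
  {c | ∃ r, 0 < r ∧ c = fracBallAverage μ q f x r}

variable {μ : Measure X} {q : ℝ} {f : X → ℝ} {x : X}

theorem fracBallAverage_mem_fracBallAverages {r : ℝ} (hr : 0 < r) :
    fracBallAverage μ q f x r ∈ fracBallAverages μ q f x :=
  ⟨r, hr, rfl⟩

theorem fracBallAverage_nonneg (r : ℝ) : 0 ≤ fracBallAverage μ q f x r :=
  mul_nonneg (Real.rpow_nonneg measureReal_nonneg _) (integral_nonneg fun _ => abs_nonneg _)

theorem sSup_fracBallAverages_nonneg : 0 ≤ sSup (fracBallAverages μ q f x) :=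
  Real.sSup_nonneg fun _ ⟨r, _, hc⟩ => hc ▸ fracBallAverage_nonneg r

-- `sSup` of an unbounded set of reals is `0`, hence the assumption `0 ≤ t`.
theorem exists_lt_fracBallAverage_of_lt_sSup {t : ℝ} (ht : 0 ≤ t)
    (h : t < sSup (fracBallAverages μ q f x)) : ∃ r, 0 < r ∧ t < fracBallAverage μ q f x r := by
  by_cases hbdd : BddAbove (fracBallAverages μ q f x)
  · obtain ⟨_, ⟨r, hr, rfl⟩, hlt⟩ :=
      exists_lt_of_lt_csSup ⟨_, fracBallAverage_mem_fracBallAverages one_pos⟩ h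
    exact ⟨r, hr, hlt⟩
  · rw [Real.sSup_of_not_bddAbove hbdd] at h
    exact absurd h ht.not_gt

end FracBallAverage

section HaarMeasure

variable {E : Type*} [NormedAddCommGroup E] [NormedSpace ℝ E] [MeasurableSpace E] [BorelSpace E]
  [FiniteDimensional ℝ E] (μ : Measure E) [μ.IsAddHaarMeasure]

theorem addHaar_real_ball_of_pos (x : E) {r : ℝ} (hr : 0 < r) :
    μ.real (ball x r) = r ^ finrank ℝ E * μ.real (ball 0 1) := by
  rw [measureReal_def, Measure.addHaar_ball_of_pos μ x hr, ENNReal.toReal_mul,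
    ENNReal.toReal_ofReal (by positivity), measureReal_def]

theorem addHaar_real_ball_lt_addHaar_real_ball [Nontrivial E] (x y : E) {r r' : ℝ} (hr : 0 < r)
    (hrr' : r < r') : μ.real (ball x r) < μ.real (ball y r') := by
  rw [addHaar_real_ball_of_pos μ x hr, addHaar_real_ball_of_pos μ y (hr.trans hrr')]
  gcongr
  · exact measureReal_ball_pos μ 0 one_pos
  · exact finrank_pos.ne'

theorem le_max_one_of_addHaar_real_ball_le [Nontrivial E] {x : E} {r C : ℝ} (hr : 0 < r)
    (h : μ.real (ball x r) ≤ C) : r ≤ max 1 (C / μ.real (ball 0 1)) := by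
  rw [addHaar_real_ball_of_pos μ x hr, ← le_div_iff₀ (measureReal_ball_pos μ 0 one_pos)] at h
  rcases le_or_gt r 1 with hr1 | hr1
  · exact le_max_of_le_left hr1
  · exact le_max_of_le_right <| (le_self_pow₀ hr1.le finrank_pos.ne').trans h

theorem exists_disjoint_subfamily_addHaar_biUnion_ball_le {ι : Type*} (t : Set ι) (x : ι → E)
    (r : ι → ℝ) (hr : ∀ i ∈ t, 0 < r i) {R : ℝ} (hR : ∀ i ∈ t, r i ≤ R) :
    ∃ u ⊆ t, u.PairwiseDisjoint (fun i => ball (x i) (r i)) ∧ u.Countable ∧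
      μ (⋃ i ∈ t, ball (x i) (r i)) ≤ 4 ^ finrank ℝ E * ∑' i : u, μ (ball (x i) (r i)) := by
  obtain ⟨u, hut, hdisj, hcover⟩ :=
    Vitali.exists_disjoint_subfamily_covering_enlargement_closedBall t x r R hR 4 (by norm_num)
  have hu : u.Countable := hdisj.countable_of_nonempty_interior fun i hi =>
    ⟨x i, ball_subset_interior_closedBall (mem_ball_self (hr i (hut hi)))⟩
  refine ⟨u, hut, hdisj.mono fun i => ball_subset_closedBall, hu, ?_⟩
  have : Countable u := hu.to_subtype
  have hsub : ⋃ i ∈ t, ball (x i) (r i) ⊆ ⋃ j ∈ u, closedBall (x j) (4 * r j) := by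
    refine iUnion₂_subset fun i hi => ?_
    obtain ⟨j, hj, hij⟩ := hcover i hi
    exact ball_subset_closedBall.trans <|
      hij.trans (subset_biUnion_of_mem (u := fun j => closedBall (x j) (4 * r j)) hj)
  calc μ (⋃ i ∈ t, ball (x i) (r i)) ≤ μ (⋃ j ∈ u, closedBall (x j) (4 * r j)) := measure_mono hsub
    _ ≤ ∑' j : u, μ (closedBall (x j) (4 * r j)) := measure_biUnion_le μ hu _
    _ = ∑' j : u, 4 ^ finrank ℝ E * μ (ball (x j) (r j)) := by
      refine tsum_congr fun j => ?_
      have hj := hr j (hut j.2)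
      rw [Measure.addHaar_closedBall μ _ (by positivity), Measure.addHaar_ball_of_pos μ _ hj,
        mul_pow, ENNReal.ofReal_mul (by positivity), ENNReal.ofReal_pow (by norm_num), mul_assoc]
      norm_num
    _ = 4 ^ finrank ℝ E * ∑' j : u, μ (ball (x j) (r j)) := ENNReal.tsum_mul_left

theorem addHaar_real_ball_div_addHaar_real_ball (x y : E) {r r' : ℝ} (hr : 0 < r) (hr' : 0 < r') :
    μ.real (ball x r) / μ.real (ball y r') = (r / r') ^ finrank ℝ E := by
  rw [addHaar_real_ball_of_pos μ x hr, addHaar_real_ball_of_pos μ y hr', div_pow,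
    mul_div_mul_right _ _ (measureReal_ball_pos μ 0 one_pos).ne']

variable {μ} {q : ℝ} {f : E → ℝ}

theorem addHaar_setOf_lt_fracBallAverage_le [Nontrivial E] (hq0 : 0 < q) (hq1 : q ≤ 1)
    (hf : Integrable f μ) {t : ℝ} (ht : 0 < t) :
    μ {x | ∃ r, 0 < r ∧ t < fracBallAverage μ q f x r} ≤
      ENNReal.ofReal (4 ^ finrank ℝ E * ((∫ y, |f y| ∂μ) / t) ^ q⁻¹) := by
  set S := {x | ∃ r, 0 < r ∧ t < fracBallAverage μ q f x r}
  have hball : ∀ x ∈ S, ∃ r, 0 < r ∧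
      μ.real (ball x r) < (∫ y in ball x r, |f y| / t ∂μ) ^ q⁻¹ := by
    rintro x ⟨r, hr, hlt⟩
    refine ⟨r, hr, ?_⟩
    rw [integral_div]
    exact lt_div_rpow_inv_of_lt_rpow_neg_mul measureReal_nonneg ht hq0 hlt
  choose! r hr0 hr using hball
  have hbound : ∀ x ∈ S, r x ≤ max 1 ((∫ y, |f y| / t ∂μ) ^ q⁻¹ / μ.real (ball 0 1)) := by
    refine fun x hx => le_max_one_of_addHaar_real_ball_le μ (hr0 x hx) ((hr x hx).le.trans ?_)
    exact Real.rpow_le_rpow (integral_nonneg fun y => by positivity)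
      (setIntegral_le_integral (hf.abs.div_const t) (.of_forall fun y => by positivity))
      (inv_nonneg.2 hq0.le)
  obtain ⟨u, hut, hdisj, hu, hcover⟩ :=
    exists_disjoint_subfamily_addHaar_biUnion_ball_le μ S id r hr0 hbound
  have : Countable u := hu.to_subtype
  calc μ S ≤ μ (⋃ x ∈ S, ball x (r x)) :=
        measure_mono fun x hx => mem_biUnion hx (mem_ball_self (hr0 x hx))
    _ ≤ 4 ^ finrank ℝ E * ∑' x : u, μ (ball x (r x)) := hcover
    _ ≤ 4 ^ finrank ℝ E * ∑' x : u, ENNReal.ofReal (∫ y in ball x (r x), |f y| / t ∂μ) ^ q⁻¹ := by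
      gcongr with x
      rw [ENNReal.ofReal_rpow_of_nonneg (integral_nonneg fun y => by positivity) (by positivity),
        ← ofReal_measureReal]
      exact ENNReal.ofReal_le_ofReal (hr x (hut x.2)).le
    _ ≤ 4 ^ finrank ℝ E * (∑' x : u, ENNReal.ofReal (∫ y in ball x (r x), |f y| / t ∂μ)) ^ q⁻¹ := by
      gcongr
      exact ENNReal.tsum_rpow_le_rpow_tsum _ (one_le_inv₀ hq0 |>.2 hq1)
    _ ≤ 4 ^ finrank ℝ E * ENNReal.ofReal (∫ y, |f y| / t ∂μ) ^ q⁻¹ := by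
      gcongr
      exact tsum_ofReal_setIntegral_le_integral (hf.abs.div_const t) (fun y => by positivity)
        (fun _ => measurableSet_ball) (hdisj.subtype _ _)
    _ = ENNReal.ofReal (4 ^ finrank ℝ E * ((∫ y, |f y| ∂μ) / t) ^ q⁻¹) := by
      rw [integral_div, ENNReal.ofReal_mul (by positivity), ENNReal.ofReal_pow (by norm_num),
        ENNReal.ofReal_rpow_of_nonneg (by positivity) (by positivity)]
      norm_num

theorem addHaar_setOf_not_bddAbove_fracBallAverages [Nontrivial E] (hq0 : 0 < q) (hq1 : q ≤ 1)
    (hf : Integrable f μ) : μ {x | ¬BddAbove (fracBallAverages μ q f x)} = 0 := by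
  have hlim : Tendsto (fun t => ENNReal.ofReal (4 ^ finrank ℝ E * ((∫ y, |f y| ∂μ) / t) ^ q⁻¹))
      atTop (𝓝 0) := by
    have h := (((tendsto_const_nhds (x := ∫ y, |f y| ∂μ)).div_atTop tendsto_id).rpow_const
      (Or.inr (inv_nonneg.2 hq0.le))).const_mul (4 ^ finrank ℝ E)
    simpa [Real.zero_rpow (inv_ne_zero hq0.ne')] using ENNReal.tendsto_ofReal h
  refine le_antisymm (ge_of_tendsto hlim ?_) bot_le
  filter_upwards [eventually_gt_atTop 0] with t ht
  refine (measure_mono fun x hx => ?_).trans (addHaar_setOf_lt_fracBallAverage_le hq0 hq1 hf ht)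
  obtain ⟨_, ⟨r, hr, rfl⟩, hlt⟩ := not_bddAbove_iff.1 hx t
  exact ⟨r, hr, hlt⟩

theorem addHaar_real_ball_rpow_neg_mul_lt_fracBallAverage [Nontrivial E] (hq : 0 < q)
    (hf : Integrable f μ) {x : E} {R ρ : ℝ} (hR : 0 < R)
    (hA : 0 < ∫ y in ball 0 R, |f y| ∂μ) (hxρ : ‖x‖ + R < ρ) :
    μ.real (ball 0 ρ) ^ (-q) * ∫ y in ball 0 R, |f y| ∂μ < fracBallAverage μ q f x (‖x‖ + R) := by
  have hr : 0 < ‖x‖ + R := by positivity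
  have hsub : ball 0 R ⊆ ball x (‖x‖ + R) := fun y hy => by
    rw [mem_ball_zero_iff] at hy
    rw [mem_ball, dist_eq_norm]
    linarith [norm_sub_le y x]
  calc μ.real (ball 0 ρ) ^ (-q) * ∫ y in ball 0 R, |f y| ∂μ
      < μ.real (ball x (‖x‖ + R)) ^ (-q) * ∫ y in ball 0 R, |f y| ∂μ := by
        refine mul_lt_mul_of_pos_right ?_ hA
        exact Real.rpow_lt_rpow_of_neg (measureReal_ball_pos μ x hr)
          (addHaar_real_ball_lt_addHaar_real_ball μ x 0 hr hxρ) (neg_lt_zero.2 hq)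
    _ ≤ fracBallAverage μ q f x (‖x‖ + R) := by
        refine mul_le_mul_of_nonneg_left ?_ (Real.rpow_nonneg measureReal_nonneg _)
        exact setIntegral_mono_set hf.abs.integrableOn (.of_forall fun y => abs_nonneg _)
          hsub.eventuallyLE

end HaarMeasure

theorem nontrivial_Rn {n : ℕ} (hn : n ≠ 0) : Nontrivial (Rn n) :=
  Module.nontrivial_of_finrank_pos (by rw [finrank_euclideanSpace_fin]; omega)

theorem one_sub_div_mem_Ioc {n : ℕ} {s : ℝ} (hs0 : 0 ≤ s) (hsn : s < n) :
    1 - s / n ∈ Ioc 0 1 := by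
  have hn : (0 : ℝ) < n := hs0.trans_lt hsn
  constructor
  · rw [sub_pos, div_lt_one hn]; exact hsn
  · rw [sub_le_self_iff]; positivity

section FractionalMaximal

variable {n : ℕ} {s : ℝ}

theorem weakNorm_nonneg (g : Rn n → ℝ) : 0 ≤ weakNorm n s g :=
  Real.sSup_nonneg fun _ ⟨t, ht, hc⟩ => hc ▸ by positivity

theorem le_weakNorm {g : Rn n → ℝ} {C : ℝ}
    (hC : ∀ t, 0 < t → t * (volume {x | t < |g x|}).toReal ^ (((n : ℝ) - s) / n) ≤ C)
    {t : ℝ} (ht : 0 < t) :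
    t * (volume {x | t < |g x|}).toReal ^ (((n : ℝ) - s) / n) ≤ weakNorm n s g :=
  le_csSup ⟨C, fun _ ⟨t, ht, hc⟩ => hc ▸ hC t ht⟩ ⟨t, ht, rfl⟩

variable {f : Rn n → ℝ}

theorem fracMaximal_eq_sSup (x : Rn n) :
    fracMaximal n s f x = sSup (fracBallAverages volume (1 - s / n) f x) :=
  rfl

theorem volume_setOf_lt_fracMaximal_le [Nontrivial (Rn n)] (hs0 : 0 ≤ s) (hsn : s < n)
    (hf : Integrable f) {t : ℝ} (ht : 0 < t) :
    volume {x | t < |fracMaximal n s f x|} ≤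
      ENNReal.ofReal (4 ^ n * ((∫ y, |f y|) / t) ^ (1 - s / n)⁻¹) := by
  obtain ⟨hq0, hq1⟩ := one_sub_div_mem_Ioc hs0 hsn
  have h := addHaar_setOf_lt_fracBallAverage_le hq0 hq1 hf ht
  rw [finrank_euclideanSpace_fin] at h
  refine (measure_mono fun x hx => ?_).trans h
  rw [mem_ofPred_eq, fracMaximal_eq_sSup, abs_of_nonneg sSup_fracBallAverages_nonneg] at hx
  exact exists_lt_fracBallAverage_of_lt_sSup ht.le hx

theorem mul_rpow_volume_setOf_lt_fracMaximal_le [Nontrivial (Rn n)] (hs0 : 0 ≤ s)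
    (hsn : s < n) (hf : Integrable f) {t : ℝ} (ht : 0 < t) :
    t * (volume {x | t < |fracMaximal n s f x|}).toReal ^ (((n : ℝ) - s) / n) ≤
      ((4 : ℝ) ^ n) ^ (1 - s / n) * ∫ y, |f y| := by
  obtain ⟨hq0, -⟩ := one_sub_div_mem_Ioc hs0 hsn
  have hI : 0 ≤ ∫ y, |f y| := integral_nonneg fun y => abs_nonneg _
  have hvol := ENNReal.toReal_le_of_le_ofReal (by positivity)
    (volume_setOf_lt_fracMaximal_le hs0 hsn hf ht)
  rw [← one_sub_div (hs0.trans_lt hsn).ne']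
  calc t * (volume {x | t < |fracMaximal n s f x|}).toReal ^ (1 - s / n)
      ≤ t * (4 ^ n * ((∫ y, |f y|) / t) ^ (1 - s / n)⁻¹) ^ (1 - s / n) := by gcongr
    _ = ((4 : ℝ) ^ n) ^ (1 - s / n) * ∫ y, |f y| := by
      rw [Real.mul_rpow (by positivity) (by positivity), ← Real.rpow_mul (by positivity),
        inv_mul_cancel₀ hq0.ne', Real.rpow_one]
      field_simp

theorem integral_ball_mul_le_weakNorm_fracMaximal [Nontrivial (Rn n)] (hs0 : 0 ≤ s)
    (hsn : s < n) (hf : Integrable f) {R ρ : ℝ} (hR : 0 < R) (hRρ : R < ρ) :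
    (∫ y in ball 0 R, |f y|) * ((ρ - R) / ρ) ^ ((n : ℝ) - s) ≤
      weakNorm n s (fracMaximal n s f) := by
  obtain ⟨hq0, hq1⟩ := one_sub_div_mem_Ioc hs0 hsn
  rcases (integral_nonneg fun y => abs_nonneg _ : 0 ≤ ∫ y in ball (0 : Rn n) R, |f y|).eq_or_lt
    with hA | hA
  · rw [← hA, zero_mul]
    exact weakNorm_nonneg _
  set A := ∫ y in ball (0 : Rn n) R, |f y|
  set t := volume.real (ball (0 : Rn n) ρ) ^ (-(1 - s / n)) * A with ht_def
  have ht : 0 < t := mul_pos (Real.rpow_pos_of_pos (measureReal_ball_pos _ _ (hR.trans hRρ)) _) hA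
  set L := {x | t < |fracMaximal n s f x|}
  have hsub : ball 0 (ρ - R) \ {x | ¬BddAbove (fracBallAverages volume (1 - s / n) f x)} ⊆ L := by
    rintro x ⟨hx, hbdd⟩
    rw [mem_ball_zero_iff] at hx
    rw [mem_ofPred_eq, fracMaximal_eq_sSup, abs_of_nonneg sSup_fracBallAverages_nonneg]
    exact (addHaar_real_ball_rpow_neg_mul_lt_fracBallAverage hq0 hf hR hA (by linarith)).trans_le
      (le_csSup (not_not.1 hbdd) (fracBallAverage_mem_fracBallAverages (by positivity)))
  have hvol : volume.real (ball (0 : Rn n) (ρ - R)) ≤ (volume L).toReal := by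
    refine ENNReal.toReal_mono (ne_top_of_le_ne_top ENNReal.ofReal_ne_top
      (volume_setOf_lt_fracMaximal_le hs0 hsn hf ht)) ?_
    rw [← measure_sdiff_null (addHaar_setOf_not_bddAbove_fracBallAverages hq0 hq1 hf)]
    exact measure_mono hsub
  calc A * ((ρ - R) / ρ) ^ ((n : ℝ) - s)
      = t * volume.real (ball (0 : Rn n) (ρ - R)) ^ (((n : ℝ) - s) / n) := by
        have hn : (n : ℝ) ≠ 0 := (hs0.trans_lt hsn).ne'
        have hρR : 0 < ρ - R := sub_pos.2 hRρ
        rw [ht_def, mul_comm _ A, mul_assoc, ← one_sub_div hn, Real.rpow_neg measureReal_nonneg,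
          ← div_eq_inv_mul, ← Real.div_rpow measureReal_nonneg measureReal_nonneg,
          addHaar_real_ball_div_addHaar_real_ball _ _ _ hρR (hR.trans hRρ),
          finrank_euclideanSpace_fin, ← Real.rpow_natCast,
          ← Real.rpow_mul (div_pos hρR (hR.trans hRρ)).le]
        congr 2
        field_simp
    _ ≤ t * (volume L).toReal ^ (((n : ℝ) - s) / n) := by gcongr
    _ ≤ weakNorm n s (fracMaximal n s f) :=
      le_weakNorm (fun _ ht' => mul_rpow_volume_setOf_lt_fracMaximal_le hs0 hsn hf ht') ht

theorem integral_ball_le_weakNorm_fracMaximal [Nontrivial (Rn n)] (hs0 : 0 ≤ s) (hsn : s < n)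
    (hf : Integrable f) (R : ℝ) : ∫ y in ball 0 R, |f y| ≤ weakNorm n s (fracMaximal n s f) := by
  rcases le_or_gt R 0 with hR | hR
  · rw [ball_eq_empty.2 hR, setIntegral_empty]
    exact weakNorm_nonneg _
  have hratio : Tendsto (fun ρ => (ρ - R) / ρ) atTop (𝓝 1) := by
    have h := (tendsto_const_nhds (x := (1 : ℝ))).sub
      ((tendsto_const_nhds (x := R)).div_atTop tendsto_id)
    rw [sub_zero] at h
    refine h.congr' ?_
    filter_upwards [eventually_gt_atTop 0] with ρ hρ
    rw [sub_div, div_self hρ.ne', id]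
  have hlim := (hratio.rpow_const (p := (n : ℝ) - s) (Or.inl one_ne_zero)).const_mul
    (∫ y in ball (0 : Rn n) R, |f y|)
  rw [Real.one_rpow, mul_one] at hlim
  exact le_of_tendsto hlim ((eventually_gt_atTop R).mono fun ρ hρ =>
    integral_ball_mul_le_weakNorm_fracMaximal hs0 hsn hf hR hρ)

end FractionalMaximal

theorem statement7_general (n : ℕ) (s : ℝ) (hs0 : 0 < s) (hsn : s < n)
    (f : Rn n → ℝ) (hf : Integrable f) :
    weakNorm n s (fracMaximal n s f) ≥ ∫ x, |f x| := by
  have : Nontrivial (Rn n) := nontrivial_Rn (by rintro rfl; norm_num at hsn; linarith)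
  exact le_of_tendsto' (tendsto_setIntegral_ball_nat hf.abs 0)
    fun k => integral_ball_le_weakNorm_fracMaximal hs0.le hsn hf k

theorem statement7 (n : ℕ) (hn : 1 ≤ n) (s : ℝ) (hs0 : 0 < s) (hsn : s < n)
    (f : Rn n → ℝ) (hf : Integrable f) :
    weakNorm n s (fracMaximal n s f) ≥ ∫ x, |f x| :=
  statement7_general n s hs0 hsn f hf
end
end

section
/- Let n ≥ 1 be an integer, 0 < s < n, and f ∈ L^1(ℝ^n). Then ‖I_s f‖_{L^{n/(n−s),∞}(ℝ^n)} ≤ γ_s v_n^{(n−s)/n} (n/s) ‖f‖_{L^1(ℝ^n)}. -/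
open MeasureTheory Real Set
open scoped ENNReal

noncomputable section

/-! If `E = {|I_s f| > λ}` has finite measure, then by Tonelli
`λ |E| ≤ γ_s ∫ |f(u)| ∫_E |x - u|^{s-n} dx du`. Since `|x - u|^{s-n}` decreases radially, the inner
integral is largest when `E` is the ball about `u` of measure `|E|`, and in polar coordinates this
ball integral is `(n/s) v_n^{(n-s)/n} |E|^{s/n}`. Dividing by `|E|^{s/n}` gives the weak-type
bound. -/

open Metric

lemma setLIntegral_le_of_measure_eq {α : Type*} [MeasurableSpace α] {μ : Measure α}
    {A B : Set α} {g : α → ℝ≥0∞} {c : ℝ≥0∞} (hA : MeasurableSet A) (hB : MeasurableSet B)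
    (hAB : μ A = μ B) (hAfin : μ A ≠ ∞) (hgA : ∀ x ∈ A \ B, g x ≤ c)
    (hgB : ∀ᵐ x ∂μ, x ∈ B \ A → c ≤ g x) :
    ∫⁻ x in A, g x ∂μ ≤ ∫⁻ x in B, g x ∂μ := by
  have hdiff : μ (A \ B) = μ (B \ A) := measure_sdiff_symm hA.nullMeasurableSet
    hB.nullMeasurableSet hAB (measure_ne_top_of_subset inter_subset_left hAfin)
  calc ∫⁻ x in A, g x ∂μ = (∫⁻ x in A ∩ B, g x ∂μ) + ∫⁻ x in A \ B, g x ∂μ :=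
        (lintegral_inter_add_sdiff _ _ hB).symm
    _ ≤ (∫⁻ x in A ∩ B, g x ∂μ) + c * μ (A \ B) := by
        gcongr
        exact (setLIntegral_mono' (hA.diff hB) hgA).trans_eq (setLIntegral_const _ _)
    _ = (∫⁻ x in B ∩ A, g x ∂μ) + c * μ (B \ A) := by rw [inter_comm, hdiff]
    _ ≤ (∫⁻ x in B ∩ A, g x ∂μ) + ∫⁻ x in B \ A, g x ∂μ := by
        gcongr
        exact (setLIntegral_const _ _).symm.trans_le (setLIntegral_mono_ae' (hB.diff hA) hgB)
    _ = ∫⁻ x in B, g x ∂μ := lintegral_inter_add_sdiff _ _ hA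

section
variable {E : Type*} [NormedAddCommGroup E] [NormedSpace ℝ E] [FiniteDimensional ℝ E]
  [MeasurableSpace E] [BorelSpace E] (μ : Measure E) [μ.IsAddHaarMeasure]

local notation "d" => Module.finrank ℝ E

lemma integral_norm_rpow_ball [Nontrivial E] {s R : ℝ} (hs : 0 < s) (hR : 0 ≤ R) :
    ∫ x in ball 0 R, ‖x‖ ^ (s - d) ∂μ = d / s * μ.real (ball 0 1) * R ^ s := by
  have hball : ∫ x in ball 0 R, ‖x‖ ^ (s - d) ∂μ =
      ∫ x, (Iio R).indicator (fun t : ℝ => t ^ (s - d)) ‖x‖ ∂μ := by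
    rw [← integral_indicator measurableSet_ball]
    congr 1 with x
    simp [indicator]
  have hradial :
      ∫ t in Ioi (0 : ℝ), t ^ (d - 1) • (Iio R).indicator (fun t : ℝ => t ^ (s - d)) t =
        ∫ t in (0 : ℝ)..R, t ^ (s - 1) := by
    rw [intervalIntegral.integral_of_le hR, integral_Ioc_eq_integral_Ioo, ← Ioi_inter_Iio,
      ← setIntegral_indicator measurableSet_Iio]
    refine setIntegral_congr_fun measurableSet_Ioi fun t (ht : 0 < t) => ?_
    by_cases htR : t < R
    · simp only [indicator_of_mem (show t ∈ Iio R from htR), smul_eq_mul]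
      rw [← rpow_natCast, ← rpow_add ht, Nat.cast_sub Module.finrank_pos]
      ring_nf
    · simp [htR]
  rw [hball, integral_fun_norm_addHaar, hradial, integral_rpow (Or.inl (by linarith))]
  simp only [nsmul_eq_mul, smul_eq_mul, sub_add_cancel, zero_rpow hs.ne']
  ring

lemma lintegral_norm_rpow_ball [Nontrivial E] {s R : ℝ} (hs : 0 < s) (hR : 0 ≤ R) :
    ∫⁻ x in ball 0 R, ENNReal.ofReal (‖x‖ ^ (s - d)) ∂μ =
      ENNReal.ofReal (d / s * μ.real (ball 0 1) * R ^ s) := by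
  have hint : IntegrableOn (fun x : E => ‖x‖ ^ (s - d)) (ball 0 R) μ := by
    refine integrableOn_ball_of_norm_le_rpow (C := 1) (α := d - s) Module.finrank_pos
      (by linarith) (.of_forall fun x => ?_)
      (measurable_norm.pow_const _).aestronglyMeasurable
    rw [one_mul, neg_sub, norm_of_nonneg (by positivity)]
  rw [← integral_norm_rpow_ball μ hs hR,
    ofReal_integral_eq_lintegral_ofReal hint (.of_forall fun x => by positivity)]

lemma lintegral_norm_sub_rpow_le [Nontrivial E] {s : ℝ} (hs : 0 < s) (hsd : s ≤ d)
    {A : Set E} (hA : MeasurableSet A) (hAfin : μ A ≠ ∞) (z : E) :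
    ∫⁻ x in A, ENNReal.ofReal (‖x - z‖ ^ (s - d)) ∂μ ≤
      ENNReal.ofReal (d / s * μ.real (ball 0 1) ^ ((d - s) / d) * μ.real A ^ (s / d)) := by
  rcases (zero_le : 0 ≤ μ A).eq_or_lt with hA0 | hApos
  · rw [setLIntegral_measure_zero _ _ hA0.symm]
    exact zero_le
  set v := μ.real (ball 0 1)
  have hv : 0 < v := ENNReal.toReal_pos (measure_ball_pos μ 0 one_pos).ne' measure_ball_lt_top.ne
  have hV : 0 < μ.real A := ENNReal.toReal_pos hApos.ne' hAfin
  have hd : (0 : ℝ) < d := Nat.cast_pos.2 Module.finrank_pos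
  have hsd' : s - d ≤ 0 := by linarith
  set R := (μ.real A / v) ^ (d : ℝ)⁻¹
  have hR : 0 < R := by positivity
  have hball : μ A = μ (ball z R) := by
    rw [← measureReal_eq_measureReal_iff hAfin measure_ball_lt_top.ne,
      ← Measure.addHaar_real_closedBall_eq_addHaar_real_ball,
      Measure.addHaar_real_closedBall _ _ hR.le,
      ← rpow_natCast, ← rpow_mul (by positivity), inv_mul_cancel₀ hd.ne', rpow_one,
      div_mul_cancel₀ _ hv.ne']
  -- The kernel is radially decreasing about `z`, so trading `A` for the ball about `z` of the
  -- same measure can only increase its integral.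
  calc ∫⁻ x in A, ENNReal.ofReal (‖x - z‖ ^ (s - d)) ∂μ
      ≤ ∫⁻ x in ball z R, ENNReal.ofReal (‖x - z‖ ^ (s - d)) ∂μ := by
        refine setLIntegral_le_of_measure_eq (c := ENNReal.ofReal (R ^ (s - d))) hA
          measurableSet_ball hball hAfin (fun x hx => ?_) ?_
        · have hxz : R ≤ ‖x - z‖ := by simpa [dist_eq_norm] using hx.2
          exact ENNReal.ofReal_le_ofReal (rpow_le_rpow_of_nonpos hR hxz hsd')
        · filter_upwards [μ.ae_ne z] with x hxz hx
          have hxz' : ‖x - z‖ ≤ R := by simpa [dist_eq_norm] using (mem_ball.1 hx.1).le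
          exact ENNReal.ofReal_le_ofReal
            (rpow_le_rpow_of_nonpos (norm_pos_iff.2 (sub_ne_zero.2 hxz)) hxz' hsd')
    _ = ∫⁻ x in ball 0 R, ENNReal.ofReal (‖x‖ ^ (s - d)) ∂μ := by
        have hpre : (· + z) ⁻¹' ball z R = ball (0 : E) R := by
          ext x
          simp [dist_eq_norm]
        rw [← (measurePreserving_add_right μ z).setLIntegral_comp_preimage_emb
          (measurableEmbedding_addRight z), hpre]
        simp
    _ = ENNReal.ofReal (d / s * v ^ ((d - s) / d) * μ.real A ^ (s / d)) := by
        rw [lintegral_norm_rpow_ball μ hs hR.le]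
        congr 1
        rw [← rpow_mul (by positivity), inv_mul_eq_div, div_rpow hV.le hv.le,
          show ((d : ℝ) - s) / d = 1 - s / d by field_simp, rpow_sub hv, rpow_one]
        ring
end

lemma rieszGamma_pos {n : ℕ} {s : ℝ} (hs : 0 < s) (hsn : s < n) : 0 < rieszGamma n s := by
  have h1 : 0 < Gamma (((n : ℝ) - s) / 2) := Gamma_pos_of_pos (by linarith)
  have h2 : 0 < Gamma (s / 2) := Gamma_pos_of_pos (by linarith)
  unfold rieszGamma
  positivity

lemma rieszPotential_congr_ae {n : ℕ} {s : ℝ} {f g : Rn n → ℝ} (hfg : f =ᵐ[volume] g) :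
    rieszPotential n s f = rieszPotential n s g := by
  ext x
  unfold rieszPotential
  congr 1
  refine integral_congr_ae ?_
  filter_upwards [(Measure.measurePreserving_sub_left volume x).quasiMeasurePreserving.ae_eq
    hfg] with y hy
  simp only [Function.comp_apply] at hy
  rw [hy]

lemma measurable_rieszPotential {n : ℕ} {s : ℝ} {f : Rn n → ℝ} (hf : Measurable f) :
    Measurable (rieszPotential n s f) := by
  refine measurable_const.mul (StronglyMeasurable.integral_prod_right'
    (f := fun p : Rn n × Rn n => f (p.1 - p.2) * ‖p.2‖ ^ (s - n)) ?_).measurable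
  exact ((hf.comp (measurable_fst.sub measurable_snd)).mul
    (measurable_snd.norm.pow_const _)).stronglyMeasurable

lemma enorm_rieszPotential_le {n : ℕ} (s : ℝ) (f : Rn n → ℝ) (x : Rn n) :
    ‖rieszPotential n s f x‖ₑ ≤
      ‖rieszGamma n s‖ₑ * ∫⁻ u, ‖f u‖ₑ * ENNReal.ofReal (‖x - u‖ ^ (s - n)) := by
  have hsubst := (Measure.measurePreserving_sub_left volume x).lintegral_comp_emb
    (MeasurableEquiv.subLeft x).measurableEmbedding
    (fun u => ‖f u‖ₑ * ENNReal.ofReal (‖x - u‖ ^ (s - n)))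
  simp only [sub_sub_cancel] at hsubst
  rw [rieszPotential, enorm_mul, ← hsubst]
  gcongr
  refine (enorm_integral_le_lintegral_enorm _).trans_eq (lintegral_congr fun y => ?_)
  rw [enorm_mul, Real.enorm_of_nonneg (rpow_nonneg (norm_nonneg y) _)]

lemma setLIntegral_enorm_rieszPotential_le {n : ℕ} (hn : 1 ≤ n) {s : ℝ} (hs : 0 < s)
    (hsn : s < n) {f : Rn n → ℝ} (hf : Measurable f) {A : Set (Rn n)} (hA : MeasurableSet A)
    (hAfin : volume A ≠ ∞) :
    ∫⁻ x in A, ‖rieszPotential n s f x‖ₑ ≤ ‖rieszGamma n s‖ₑ * (∫⁻ u, ‖f u‖ₑ) *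
      ENNReal.ofReal (n / s * unitBallVol n ^ ((n - s) / n) * volume.real A ^ (s / n)) := by
  have : Nontrivial (Rn n) :=
    Module.nontrivial_of_finrank_pos (R := ℝ) (by rw [finrank_euclideanSpace_fin]; omega)
  have hkernel := lintegral_norm_sub_rpow_le (volume : Measure (Rn n)) hs
    (by rw [finrank_euclideanSpace_fin]; exact hsn.le) hA hAfin
  simp only [finrank_euclideanSpace_fin] at hkernel
  have hmeas : Measurable (Function.uncurry fun (x u : Rn n) =>
      ‖f u‖ₑ * ENNReal.ofReal (‖x - u‖ ^ (s - n))) := by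
    fun_prop
  calc ∫⁻ x in A, ‖rieszPotential n s f x‖ₑ
      ≤ ∫⁻ x in A, ‖rieszGamma n s‖ₑ * ∫⁻ u, ‖f u‖ₑ * ENNReal.ofReal (‖x - u‖ ^ (s - n)) :=
        lintegral_mono fun x => enorm_rieszPotential_le s f x
    _ = ‖rieszGamma n s‖ₑ * ∫⁻ u, ‖f u‖ₑ * ∫⁻ x in A, ENNReal.ofReal (‖x - u‖ ^ (s - n)) := by
        rw [lintegral_const_mul' _ _ enorm_ne_top, lintegral_lintegral_swap hmeas.aemeasurable]
        simp_rw [lintegral_const_mul' _ _ enorm_ne_top]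
    _ ≤ _ := by
        rw [mul_assoc, ← lintegral_mul_const' _ _ ENNReal.ofReal_ne_top]
        gcongr with u
        exact hkernel u

lemma mul_rpow_one_sub_le {lam C V a : ℝ} (hC : 0 ≤ C) (hV : 0 ≤ V) (ha : a < 1)
    (h : lam * V ≤ C * V ^ a) : lam * V ^ (1 - a) ≤ C := by
  rcases hV.eq_or_lt with rfl | hV
  · rw [zero_rpow (by linarith), mul_zero]
    exact hC
  · refine le_of_mul_le_mul_right ?_ (rpow_pos_of_pos hV a)
    rwa [mul_assoc, ← rpow_add hV, sub_add_cancel, rpow_one]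

lemma mul_volume_lt_abs_rieszPotential_le {n : ℕ} (hn : 1 ≤ n) {s : ℝ} (hs : 0 < s)
    (hsn : s < n) {f : Rn n → ℝ} (hf : Measurable f) (hfi : Integrable f) {lam : ℝ}
    (hlam : 0 < lam) :
    lam * (volume {x | lam < |rieszPotential n s f x|}).toReal ^ (((n : ℝ) - s) / n) ≤
      rieszGamma n s * unitBallVol n ^ (((n : ℝ) - s) / n) * (n / s) * ∫ x, |f x| := by
  set A := {x | lam < |rieszPotential n s f x|}
  have hγ := rieszGamma_pos hs hsn
  have hn0 : (0 : ℝ) < n := by exact_mod_cast hn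
  have hexp : ((n : ℝ) - s) / n = 1 - s / n := by field_simp
  rw [hexp]
  have hv : 0 ≤ unitBallVol n := ENNReal.toReal_nonneg
  have hC : 0 ≤ rieszGamma n s * unitBallVol n ^ (1 - s / n) * (n / s) * ∫ x, |f x| := by
    have : 0 ≤ ∫ x, |f x| := integral_nonneg fun x => abs_nonneg (f x)
    positivity
  have hImeas : Measurable (rieszPotential n s f) := measurable_rieszPotential hf
  have hA : MeasurableSet A := measurableSet_lt measurable_const hImeas.abs
  by_cases hAfin : volume A = ∞
  · -- `weakNorm` measures `A` through `toReal`, which sends `∞` to `0`.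
    rw [hAfin, ENNReal.toReal_top, zero_rpow (by rw [← hexp]; positivity), mul_zero]
    exact hC
  have hchebyshev : ENNReal.ofReal lam * volume A ≤ ∫⁻ x in A, ‖rieszPotential n s f x‖ₑ := by
    rw [← setLIntegral_const]
    refine setLIntegral_mono hImeas.enorm fun x hx => ?_
    rw [Real.enorm_eq_ofReal_abs]
    exact ENNReal.ofReal_le_ofReal hx.le
  have hbound := hchebyshev.trans
    (setLIntegral_enorm_rieszPotential_le hn hs hsn hf hA hAfin)
  rw [Real.enorm_of_nonneg hγ.le, ← ofReal_integral_norm_eq_lintegral_enorm hfi,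
    ← ofReal_measureReal hAfin, ← ENNReal.ofReal_mul hlam.le, ← ENNReal.ofReal_mul hγ.le,
    ← ENNReal.ofReal_mul (by positivity), ENNReal.ofReal_le_ofReal_iff (by positivity), hexp]
    at hbound
  refine mul_rpow_one_sub_le hC ENNReal.toReal_nonneg ((div_lt_one hn0).2 hsn) ?_
  simp only [Real.norm_eq_abs] at hbound
  exact hbound.trans_eq (by rw [measureReal_def]; ring)

theorem statement9 (n : ℕ) (hn : 1 ≤ n) (s : ℝ) (hs0 : 0 < s) (hsn : s < n)
    (f : Rn n → ℝ) (hf : Integrable f) :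
    weakNorm n s (rieszPotential n s f) ≤
      rieszGamma n s * unitBallVol n ^ (((n : ℝ) - s) / (n : ℝ)) * ((n : ℝ) / s) *
        ∫ x, |f x| := by
  obtain ⟨g, hg, hfg⟩ := hf.aestronglyMeasurable
  have hnorm : ∫ x, |f x| = ∫ x, |g x| := integral_congr_ae (hfg.fun_comp abs)
  rw [rieszPotential_congr_ae hfg, hnorm]
  refine csSup_le ⟨_, 1, one_pos, rfl⟩ ?_
  rintro c ⟨lam, hlam, rfl⟩
  exact mul_volume_lt_abs_rieszPotential_le hn hs0 hsn hg.measurable (hf.congr hfg) hlam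
end
end

section
/- Let n ≥ 1 be an integer, 0 < s < n, let g(x) = (2/(1+|x|²))^{(n+s)/2}, and let c_{n,s} = π^{n/2} 2^{(s+n)/2} Γ(s/2)/Γ((s+n)/2). Then for every λ with 0 < λ < γ_s c_{n,s}, the set {x ∈ ℝ^n : I_s g(x) > λ} has Lebesgue measure v_n ((γ_s c_{n,s}/λ)^{2/(n−s)} − 1)^{n/2}. -/
open MeasureTheory Real Set
open scoped ENNReal

noncomputable section

/-!
The potential of `g` has the closed form `I_s g(x) = γ_s c_{n,s} (1 + |x|²)^{-(n-s)/2}`, so the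
superlevel set is a centred ball whose radius is read off from `λ`.

For the closed form, with `a = (n-s)/2` and `b = (n+s)/2 = n - a`, both factors of the kernel
`|y|^{-2a} (1 + |x-y|²)^{-b}` are written as Gamma-subordinated Gaussians,
`Γ(a) A^{-a} = ∫₀^∞ t^{a-1} e^{-tA} dt`. After Tonelli the `y`-integral is an explicit Gaussian
integral; the substitution `t = uv` separates the two remaining variables into a Gamma integral in
`u` and a Beta integral in `v`, and the relation `a + b = n` is what makes the `x`-dependence
collapse to `(1 + |x|²)^{-a}`.
-/

lemma lintegral_ofReal_const_mul {α : Type*} [MeasurableSpace α] {μ : Measure α} {c : ℝ}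
    (hc : 0 ≤ c) (f : α → ℝ) :
    ∫⁻ x, ENNReal.ofReal (c * f x) ∂μ = ENNReal.ofReal c * ∫⁻ x, ENNReal.ofReal (f x) ∂μ := by
  simp_rw [ENNReal.ofReal_mul hc]
  exact lintegral_const_mul' _ _ ENNReal.ofReal_ne_top

lemma lintegral_rpow_mul_exp_neg_mul_Ioi {a r : ℝ} (ha : 0 < a) (hr : 0 < r) :
    ∫⁻ t in Ioi (0 : ℝ), ENNReal.ofReal (t ^ (a - 1) * exp (-(r * t))) =
      ENNReal.ofReal (r ^ (-a) * Gamma a) := by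
  have hint : IntegrableOn (fun t : ℝ ↦ t ^ (a - 1) * exp (-(r * t))) (Ioi 0) :=
    Integrable.of_integral_ne_zero <| by
      rw [integral_rpow_mul_exp_neg_mul_Ioi ha hr]; positivity
  rw [← ofReal_integral_eq_lintegral_ofReal hint, integral_rpow_mul_exp_neg_mul_Ioi ha hr,
    one_div, inv_rpow hr.le, rpow_neg hr.le]
  filter_upwards [ae_restrict_mem measurableSet_Ioi] with t (ht : 0 < t)
  positivity

lemma setLIntegral_Ioi_zero_comp_mul_left {c : ℝ} (hc : 0 < c) (f : ℝ → ℝ≥0∞) :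
    ∫⁻ t in Ioi (0 : ℝ), f t = ENNReal.ofReal c * ∫⁻ v in Ioi (0 : ℝ), f (c * v) := by
  have he : MeasurableEmbedding (c * ·) := (Homeomorph.mulLeft₀ c hc.ne').measurableEmbedding
  have hpre : (c * ·) ⁻¹' Ioi (0 : ℝ) = Ioi 0 := by
    ext v; simp [mul_pos_iff_of_pos_left hc]
  conv_rhs => rw [← he.lintegral_map, ← hpre, ← he.restrict_map]
  rw [Real.map_volume_mul_left hc.ne', Measure.restrict_smul, lintegral_smul_measure,
    abs_of_pos (inv_pos.mpr hc), smul_eq_mul, ← mul_assoc, ← ENNReal.ofReal_mul hc.le, mul_inv_cancel₀ hc.ne', ENNReal.ofReal_one, one_mul]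

lemma lintegral_rpow_mul_one_add_mul_rpow_neg_Ioi {p q R : ℝ} (hp : 0 < p) (hq : 0 < q)
    (hR : 0 < R) :
    ∫⁻ w in Ioi (0 : ℝ), ENNReal.ofReal (w ^ (p - 1) * (1 + R * w) ^ (-(p + q))) =
      ENNReal.ofReal (R ^ (-p) * (Gamma p * Gamma q / Gamma (p + q))) := by
  have hpq : 0 < p + q := by linarith
  set F : ℝ → ℝ → ℝ≥0∞ := fun w t ↦
    ENNReal.ofReal (w ^ (p - 1) * (t ^ (p + q - 1) * exp (-((1 + R * w) * t))))
  have hw : ∀ w ∈ Ioi (0 : ℝ), ∫⁻ t in Ioi 0, F w t =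
      ENNReal.ofReal (Gamma (p + q) * (w ^ (p - 1) * (1 + R * w) ^ (-(p + q)))) := by
    intro w (hw : 0 < w)
    rw [lintegral_ofReal_const_mul (by positivity), lintegral_rpow_mul_exp_neg_mul_Ioi hpq
      (by positivity), ← ENNReal.ofReal_mul (by positivity)]
    ring_nf
  have ht : ∀ t ∈ Ioi (0 : ℝ), ∫⁻ w in Ioi 0, F w t =
      ENNReal.ofReal (R ^ (-p) * Gamma p * (t ^ (q - 1) * exp (-(1 * t)))) := by
    intro t (ht : 0 < t)
    have hF : ∀ w, F w t = ENNReal.ofReal (t ^ (p + q - 1) * exp (-t) *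
        (w ^ (p - 1) * exp (-(t * R * w)))) := fun w ↦ by
      simp only [F, add_mul, one_mul, neg_add, exp_add]; ring_nf
    simp_rw [hF]
    rw [lintegral_ofReal_const_mul (by positivity),
      lintegral_rpow_mul_exp_neg_mul_Ioi hp (by positivity), ← ENNReal.ofReal_mul (by positivity)]
    congr 1
    have : t ^ (p + q - 1) * t ^ (-p) = t ^ (q - 1) := by rw [← rpow_add ht]; ring_nf
    rw [one_mul, ← this, mul_rpow ht.le hR.le]
    ring
  have hswap : ∫⁻ w in Ioi 0, ∫⁻ t in Ioi 0, F w t = ∫⁻ t in Ioi 0, ∫⁻ w in Ioi 0, F w t :=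
    lintegral_lintegral_swap (by fun_prop)
  rw [setLIntegral_congr_fun measurableSet_Ioi hw, setLIntegral_congr_fun measurableSet_Ioi ht,
    lintegral_ofReal_const_mul (Gamma_pos_of_pos hpq).le,
    lintegral_ofReal_const_mul (by positivity),
    lintegral_rpow_mul_exp_neg_mul_Ioi hq one_pos, one_rpow, one_mul,
    ← ENNReal.ofReal_mul (by positivity)] at hswap
  rw [← ENNReal.mul_right_inj (a := ENNReal.ofReal (Gamma (p + q))) (by simp [Gamma_pos_of_pos hpq])
    ENNReal.ofReal_ne_top, hswap, ← ENNReal.ofReal_mul (Gamma_pos_of_pos hpq).le]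
  congr 1
  field_simp [(Gamma_pos_of_pos hpq).ne']

lemma lintegral_Ioi_lintegral_Ioi_rpow_mul_rpow_mul_exp {a b A B : ℝ} (ha : 0 < a) (hb : 0 < b)
    (hA : 0 < A) (hB : 0 < B) :
    ∫⁻ t in Ioi (0 : ℝ), ∫⁻ u in Ioi (0 : ℝ),
        ENNReal.ofReal (t ^ (a - 1) * u ^ (b - 1) * exp (-(A * t + B * u))) =
      ENNReal.ofReal (Gamma a * Gamma b * (A ^ (-a) * B ^ (-b))) := by
  have hu : ∀ t ∈ Ioi (0 : ℝ), ∫⁻ u in Ioi (0 : ℝ),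
      ENNReal.ofReal (t ^ (a - 1) * u ^ (b - 1) * exp (-(A * t + B * u))) =
      ENNReal.ofReal (B ^ (-b) * Gamma b * (t ^ (a - 1) * exp (-(A * t)))) := by
    intro t (ht : 0 < t)
    have hsplit : ∀ u, t ^ (a - 1) * u ^ (b - 1) * exp (-(A * t + B * u)) =
        t ^ (a - 1) * exp (-(A * t)) * (u ^ (b - 1) * exp (-(B * u))) := fun u ↦ by
      rw [neg_add, exp_add]; ring
    simp_rw [hsplit]
    rw [lintegral_ofReal_const_mul (by positivity), lintegral_rpow_mul_exp_neg_mul_Ioi hb hB,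
      ← ENNReal.ofReal_mul (by positivity), mul_comm]
  rw [setLIntegral_congr_fun measurableSet_Ioi hu, lintegral_ofReal_const_mul (by positivity),
    lintegral_rpow_mul_exp_neg_mul_Ioi ha hA, ← ENNReal.ofReal_mul (by positivity)]
  ring_nf

lemma lintegral_Ioi_lintegral_Ioi_rpow_mul_exp_eq_gamma_mul_gamma {a d r : ℝ} (ha : 0 < a)
    (had : a < d) (hr : 0 ≤ r) :
    ∫⁻ t in Ioi (0 : ℝ), ∫⁻ u in Ioi (0 : ℝ), ENNReal.ofReal
        (t ^ (a - 1) * u ^ (2 * d - a - 1) * (t + u) ^ (-d) * exp (-(u + t * u / (t + u) * r))) =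
      ENNReal.ofReal (Gamma a * Gamma (d - a) * (1 + r) ^ (-a)) := by
  have hd : 0 < d := ha.trans had
  have hsub : ∀ u ∈ Ioi (0 : ℝ), ∫⁻ t in Ioi (0 : ℝ), ENNReal.ofReal
        (t ^ (a - 1) * u ^ (2 * d - a - 1) * (t + u) ^ (-d) * exp (-(u + t * u / (t + u) * r))) =
      ∫⁻ v in Ioi (0 : ℝ), ENNReal.ofReal (v ^ (a - 1) * (1 + v) ^ (-d) *
        (u ^ (d - 1) * exp (-((1 + v * r / (1 + v)) * u)))) := by
    intro u (hu : 0 < u)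
    rw [setLIntegral_Ioi_zero_comp_mul_left hu, ← lintegral_ofReal_const_mul hu.le]
    refine setLIntegral_congr_fun measurableSet_Ioi fun v (hv : 0 < v) ↦ ?_
    have hexp : u + u * v * u / (u * v + u) * r = (1 + v * r / (1 + v)) * u := by
      field_simp; ring
    have hpow : u ^ (d - 1) = u * u ^ (a - 1) * u ^ (2 * d - a - 1) * u ^ (-d) := by
      rw [show d - 1 = 1 + (a - 1) + (2 * d - a - 1) + -d by ring, rpow_add hu, rpow_add hu,
        rpow_add hu, rpow_one]
    rw [hexp, hpow, show u * v + u = u * (1 + v) by ring, mul_rpow hu.le hv.le,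
      mul_rpow hu.le (by positivity)]
    ring_nf
  have hu : ∀ v ∈ Ioi (0 : ℝ), ∫⁻ u in Ioi (0 : ℝ), ENNReal.ofReal (v ^ (a - 1) * (1 + v) ^ (-d) *
        (u ^ (d - 1) * exp (-((1 + v * r / (1 + v)) * u)))) =
      ENNReal.ofReal (Gamma d * (v ^ (a - 1) * (1 + (1 + r) * v) ^ (-(a + (d - a))))) := by
    intro v (hv : 0 < v)
    rw [lintegral_ofReal_const_mul (by positivity),
      lintegral_rpow_mul_exp_neg_mul_Ioi hd (by positivity), ← ENNReal.ofReal_mul (by positivity)]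
    congr 1
    have hmul : (1 + v) * (1 + v * r / (1 + v)) = 1 + (1 + r) * v := by field_simp; ring
    rw [add_sub_cancel, ← hmul, mul_rpow (by positivity) (by positivity)]
    ring
  rw [lintegral_lintegral_swap (by fun_prop), setLIntegral_congr_fun measurableSet_Ioi hsub,
    lintegral_lintegral_swap (by fun_prop), setLIntegral_congr_fun measurableSet_Ioi hu,
    lintegral_ofReal_const_mul (Gamma_pos_of_pos hd).le,
    lintegral_rpow_mul_one_add_mul_rpow_neg_Ioi ha (sub_pos.mpr had) (by positivity),
    ← ENNReal.ofReal_mul (Gamma_pos_of_pos hd).le, add_sub_cancel]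
  congr 1
  field_simp [(Gamma_pos_of_pos hd).ne']

lemma mul_norm_sq_add_mul_norm_sub_sq {V : Type*} [NormedAddCommGroup V] [InnerProductSpace ℝ V]
    (x y : V) {t u : ℝ} (htu : t + u ≠ 0) :
    t * ‖y‖ ^ 2 + u * ‖x - y‖ ^ 2 =
      (t + u) * ‖y - (u / (t + u)) • x‖ ^ 2 + t * u / (t + u) * ‖x‖ ^ 2 := by
  rw [norm_sub_sq_real, norm_sub_sq_real, norm_smul, mul_pow, real_inner_smul_right,
    real_inner_comm, Real.norm_eq_abs, sq_abs]
  field_simp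
  ring

section Gaussian

open Module

variable {V : Type*} [NormedAddCommGroup V] [InnerProductSpace ℝ V] [FiniteDimensional ℝ V]
  [MeasurableSpace V] [BorelSpace V]

lemma lintegral_exp_neg_mul_norm_sq {b : ℝ} (hb : 0 < b) :
    ∫⁻ y : V, ENNReal.ofReal (exp (-(b * ‖y‖ ^ 2))) =
      ENNReal.ofReal ((π / b) ^ ((finrank ℝ V : ℝ) / 2)) := by
  have h := GaussianFourier.integral_rexp_neg_mul_sq_norm (V := V) hb
  simp only [neg_mul] at h
  rw [← h, ofReal_integral_eq_lintegral_ofReal (.of_integral_ne_zero (by rw [h]; positivity))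
    (ae_of_all _ fun _ ↦ (exp_pos _).le)]

lemma lintegral_exp_neg_mul_norm_sq_add_mul_norm_sub_sq (x : V) {t u : ℝ} (ht : 0 < t)
    (hu : 0 < u) :
    ∫⁻ y : V, ENNReal.ofReal (exp (-(t * ‖y‖ ^ 2 + u * ‖x - y‖ ^ 2))) =
      ENNReal.ofReal ((π / (t + u)) ^ ((finrank ℝ V : ℝ) / 2) *
        exp (-(t * u / (t + u) * ‖x‖ ^ 2))) := by
  have htu : 0 < t + u := by linarith
  simp_rw [mul_norm_sq_add_mul_norm_sub_sq x _ htu.ne', neg_add, exp_add,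
    ENNReal.ofReal_mul (exp_pos _).le]
  rw [lintegral_mul_const' _ _ ENNReal.ofReal_ne_top,
    lintegral_sub_right_eq_self (fun y ↦ ENNReal.ofReal (exp (-((t + u) * ‖y‖ ^ 2)))),
    lintegral_exp_neg_mul_norm_sq htu, ← ENNReal.ofReal_mul (by positivity)]

lemma lintegral_rpow_mul_rpow_mul_exp_neg_norm_sq (x : V) {a b t u : ℝ} (ht : 0 < t) (hu : 0 < u) :
    ∫⁻ y : V, ENNReal.ofReal
        (t ^ (a - 1) * u ^ (b - 1) * exp (-(‖y‖ ^ 2 * t + (1 + ‖x - y‖ ^ 2) * u))) =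
      ENNReal.ofReal (π ^ ((finrank ℝ V : ℝ) / 2)) * ENNReal.ofReal (t ^ (a - 1) * u ^ (b - 1) *
        (t + u) ^ (-((finrank ℝ V : ℝ) / 2)) * exp (-(u + t * u / (t + u) * ‖x‖ ^ 2))) := by
  have hsplit : ∀ y : V, t ^ (a - 1) * u ^ (b - 1) * exp (-(‖y‖ ^ 2 * t + (1 + ‖x - y‖ ^ 2) * u)) =
      t ^ (a - 1) * u ^ (b - 1) * exp (-u) * exp (-(t * ‖y‖ ^ 2 + u * ‖x - y‖ ^ 2)) := fun y ↦ by
    rw [show -(‖y‖ ^ 2 * t + (1 + ‖x - y‖ ^ 2) * u) = -u + -(t * ‖y‖ ^ 2 + u * ‖x - y‖ ^ 2) by ring,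
      exp_add]
    ring
  simp_rw [hsplit]
  rw [lintegral_ofReal_const_mul (by positivity),
    lintegral_exp_neg_mul_norm_sq_add_mul_norm_sub_sq x ht hu, ← ENNReal.ofReal_mul (by positivity),
    ← ENNReal.ofReal_mul (by positivity), div_rpow pi_pos.le (by positivity),
    rpow_neg (by positivity), neg_add, exp_add]
  ring_nf

theorem lintegral_rpow_norm_sq_mul_rpow_one_add_norm_sub_sq (x : V) {a : ℝ} (ha : 0 < a)
    (han : a < finrank ℝ V / 2) :
    ∫⁻ y : V, ENNReal.ofReal ((‖y‖ ^ 2) ^ (-a) * (1 + ‖x - y‖ ^ 2) ^ (-(finrank ℝ V - a))) =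
      ENNReal.ofReal (π ^ ((finrank ℝ V : ℝ) / 2) * Gamma (finrank ℝ V / 2 - a) /
        Gamma (finrank ℝ V - a) * (1 + ‖x‖ ^ 2) ^ (-a)) := by
  set n : ℝ := (finrank ℝ V : ℝ) with hn
  have hb : 0 < n - a := by linarith
  have : Nontrivial V := Module.finrank_pos_iff.mp (by
    have : (0 : ℝ) < finrank ℝ V := by linarith
    exact_mod_cast this)
  have hGa := Gamma_pos_of_pos ha
  have hGb := Gamma_pos_of_pos hb
  set G : V → ℝ → ℝ → ℝ≥0∞ := fun y t u ↦ ENNReal.ofReal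
    (t ^ (a - 1) * u ^ (n - a - 1) * exp (-(‖y‖ ^ 2 * t + (1 + ‖x - y‖ ^ 2) * u)))
  have hsub : ∀ᵐ y : V, ENNReal.ofReal (Gamma a * Gamma (n - a)) *
      ENNReal.ofReal ((‖y‖ ^ 2) ^ (-a) * (1 + ‖x - y‖ ^ 2) ^ (-(n - a))) =
      ∫⁻ t in Ioi (0 : ℝ), ∫⁻ u in Ioi (0 : ℝ), G y t u := by
    -- only a.e.: at `y = 0` the left side is `0` (as `0 ^ (-a) = 0`) and the right side is `∞`
    filter_upwards [volume.ae_ne 0] with y hy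
    rw [lintegral_Ioi_lintegral_Ioi_rpow_mul_rpow_mul_exp ha hb (by positivity) (by positivity),
      ← ENNReal.ofReal_mul (by positivity)]
  have hswap : ∫⁻ y : V, ∫⁻ t in Ioi (0 : ℝ), ∫⁻ u in Ioi (0 : ℝ), G y t u =
      ∫⁻ t in Ioi (0 : ℝ), ∫⁻ u in Ioi (0 : ℝ), ∫⁻ y : V, G y t u := by
    have hG : Measurable fun p : (V × ℝ) × ℝ ↦ G p.1.1 p.1.2 p.2 := by fun_prop
    rw [lintegral_lintegral_swap (hG.lintegral_prod_right').aemeasurable]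
    exact lintegral_congr fun t ↦ lintegral_lintegral_swap (by fun_prop)
  rw [← ENNReal.mul_right_inj (a := ENNReal.ofReal (Gamma a * Gamma (n - a)))
    (by simp; positivity) ENNReal.ofReal_ne_top, ← lintegral_const_mul' _ _ ENNReal.ofReal_ne_top,
    lintegral_congr_ae hsub, hswap]
  simp_rw [G]
  rw [setLIntegral_congr_fun measurableSet_Ioi fun t ht ↦ setLIntegral_congr_fun measurableSet_Ioi
    fun u hu ↦ lintegral_rpow_mul_rpow_mul_exp_neg_norm_sq x ht hu]
  simp only [lintegral_const_mul' _ _ ENNReal.ofReal_ne_top]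
  rw [show n - a - 1 = 2 * (n / 2) - a - 1 by ring,
    lintegral_Ioi_lintegral_Ioi_rpow_mul_exp_eq_gamma_mul_gamma ha han (by positivity),
    ← ENNReal.ofReal_mul (by positivity), ← ENNReal.ofReal_mul (by positivity), ← hn]
  congr 1
  field_simp

end Gaussian

lemma rieszPotential_eq {n : ℕ} {s : ℝ} (hs0 : 0 < s) (hsn : s < n) (x : Rn n) :
    rieszPotential n s (fun x ↦ ((2 : ℝ) / (1 + ‖x‖ ^ 2)) ^ (((n : ℝ) + s) / 2)) x =
      rieszGamma n s * (π ^ ((n : ℝ) / 2) * (2 : ℝ) ^ ((s + (n : ℝ)) / 2) * Gamma (s / 2) /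
        Gamma ((s + (n : ℝ)) / 2)) * (1 + ‖x‖ ^ 2) ^ (-(((n : ℝ) - s) / 2)) := by
  have hkernel : ∀ y : Rn n, ((2 : ℝ) / (1 + ‖x - y‖ ^ 2)) ^ (((n : ℝ) + s) / 2) * ‖y‖ ^ (s - n) =
      2 ^ ((s + (n : ℝ)) / 2) *
        ((‖y‖ ^ 2) ^ (-(((n : ℝ) - s) / 2)) * (1 + ‖x - y‖ ^ 2) ^ (-((s + (n : ℝ)) / 2))) := by
    intro y
    have hy : ‖y‖ ^ (s - n) = (‖y‖ ^ 2) ^ (-(((n : ℝ) - s) / 2)) := by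
      rw [← rpow_natCast_mul (norm_nonneg y)]; ring_nf
    rw [hy, div_rpow zero_le_two (by positivity), rpow_neg (x := 1 + ‖x - y‖ ^ 2) (by positivity),
      add_comm s]
    ring
  have hint := lintegral_rpow_norm_sq_mul_rpow_one_add_norm_sub_sq x
    (a := ((n : ℝ) - s) / 2) (by linarith) (by simp; linarith)
  rw [finrank_euclideanSpace_fin, show (n : ℝ) / 2 - ((n : ℝ) - s) / 2 = s / 2 by ring,
    show (n : ℝ) - ((n : ℝ) - s) / 2 = (s + n) / 2 by ring] at hint
  have := Gamma_pos_of_pos (half_pos hs0)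
  have := Gamma_pos_of_pos (show 0 < (s + n) / 2 by linarith)
  rw [rieszPotential, integral_eq_lintegral_of_nonneg_ae (ae_of_all _ fun y ↦ by positivity)
    (by fun_prop), mul_assoc]
  simp_rw [hkernel]
  rw [lintegral_ofReal_const_mul (by positivity), hint, ← ENNReal.ofReal_mul (by positivity),
    ENNReal.toReal_ofReal (by positivity)]
  ring

lemma setOf_lt_mul_one_add_norm_sq_rpow_neg {E : Type*} [SeminormedAddCommGroup E]
    {A p lam : ℝ} (hp : 0 < p) (hlam : 0 < lam) (hA : 0 < A) :
    {x : E | lam < A * (1 + ‖x‖ ^ 2) ^ (-p)} = Metric.ball 0 √((A / lam) ^ p⁻¹ - 1) := by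
  ext x
  have hx : 0 < 1 + ‖x‖ ^ 2 := by positivity
  rw [mem_ofPred_eq, mem_ball_zero_iff, lt_sqrt (norm_nonneg x), lt_sub_iff_add_lt',
    lt_rpow_inv_iff_of_pos hx.le (by positivity) hp, lt_div_iff₀ hlam, rpow_neg hx.le,
    lt_mul_inv_iff₀' (by positivity), mul_comm]

lemma volume_ball_sqrt {n : ℕ} (hn : n ≠ 0) {K : ℝ} (hK : 0 ≤ K) :
    volume (Metric.ball (0 : Rn n) √K) = ENNReal.ofReal (unitBallVol n * K ^ ((n : ℝ) / 2)) := by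
  have : NeZero n := ⟨hn⟩
  rw [Measure.addHaar_ball _ _ (sqrt_nonneg K), finrank_euclideanSpace_fin, unitBallVol,
    ENNReal.ofReal_mul ENNReal.toReal_nonneg, ENNReal.ofReal_toReal measure_ball_lt_top.ne,
    mul_comm, sqrt_eq_rpow, ← rpow_natCast, ← rpow_mul hK]
  ring_nf

theorem statement13_general (n : ℕ) (s : ℝ) (hs0 : 0 < s) (hsn : s < n)
    (g : Rn n → ℝ)
    (hg : g = fun x => ((2 : ℝ) / (1 + ‖x‖ ^ 2)) ^ (((n : ℝ) + s) / 2))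
    (c : ℝ)
    (hc : c = Real.pi ^ ((n : ℝ) / 2) * (2 : ℝ) ^ ((s + (n : ℝ)) / 2) *
        Real.Gamma (s / 2) / Real.Gamma ((s + (n : ℝ)) / 2))
    (lam : ℝ) (hlam0 : 0 < lam) (hlam1 : lam < rieszGamma n s * c) :
    volume {x : Rn n | lam < rieszPotential n s g x} =
      ENNReal.ofReal (unitBallVol n *
        ((rieszGamma n s * c / lam) ^ (2 / ((n : ℝ) - s)) - 1) ^ ((n : ℝ) / 2)) := by
  have hns : 0 < (n : ℝ) - s := by linarith
  have hball : {x : Rn n | lam < rieszPotential n s g x} =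
      Metric.ball 0 √((rieszGamma n s * c / lam) ^ (2 / ((n : ℝ) - s)) - 1) := by
    subst hg hc
    simp_rw [rieszPotential_eq hs0 hsn]
    rw [setOf_lt_mul_one_add_norm_sq_rpow_neg (half_pos hns) hlam0 (hlam0.trans hlam1), inv_div]
  have hradius : 0 ≤ (rieszGamma n s * c / lam) ^ (2 / ((n : ℝ) - s)) - 1 :=
    sub_nonneg.mpr (one_le_rpow ((one_le_div hlam0).mpr hlam1.le) (by positivity))
  rw [hball, volume_ball_sqrt (by rintro rfl; simp at hsn; linarith) hradius]

theorem statement13 (n : ℕ) (hn : 1 ≤ n) (s : ℝ) (hs0 : 0 < s) (hsn : s < n)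
    (g : Rn n → ℝ)
    (hg : g = fun x => ((2 : ℝ) / (1 + ‖x‖ ^ 2)) ^ (((n : ℝ) + s) / 2))
    (c : ℝ)
    (hc : c = Real.pi ^ ((n : ℝ) / 2) * (2 : ℝ) ^ ((s + (n : ℝ)) / 2) *
        Real.Gamma (s / 2) / Real.Gamma ((s + (n : ℝ)) / 2))
    (lam : ℝ) (hlam0 : 0 < lam) (hlam1 : lam < rieszGamma n s * c) :
    volume {x : Rn n | lam < rieszPotential n s g x} =
      ENNReal.ofReal (unitBallVol n *
        ((rieszGamma n s * c / lam) ^ (2 / ((n : ℝ) - s)) - 1) ^ ((n : ℝ) / 2)) :=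
  statement13_general n s hs0 hsn g hg c hc lam hlam0 hlam1
end
end
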